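/- For morphisms f₁ : L₁¹ → L₁² and f₂ : L₂¹ → L₂² in Cal⁰_Sym, there is a unique morphism u : L₁¹⊛L₂¹ → L₁²⊛L₂² in Cal⁰_Sym such that u({(p₁,p₂)}) = {(f₁(p₁), f₂(p₂))} for all atoms p₁, p₂ with f₁(p₁) ≠ 0 and f₂(p₂) ≠ 0, and u({(p₁,p₂)}) = ∅ otherwise. -/

import Mathlib

open Set

def PreservesJoins {α β : Type*} [CompleteLattice α] [CompleteLattice β] (f : α → β) : Prop :=
  ∀ s : Set α, f (sSup s) = sSup (f '' s)

def rAdj {α β : Type*} [CompleteLattice α] [CompleteLattice β] (f : α → β) : β → α :=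
  fun b => sSup {a | f a ≤ b}

def atomsBelow {α : Type*} [CompleteLattice α] (a : α) : Set α := {p | IsAtom p ∧ p ≤ a}

def coatomsAbove {α : Type*} [CompleteLattice α] (a : α) : Set α := {x | IsCoatom x ∧ a ≤ x}

/-- A morphism of `Cal⁰_Sym`: preserves arbitrary joins, sends atoms to atoms or `⊥`,
and its right adjoint sends coatoms to coatoms or `⊤`. -/
def IsMor {α β : Type*} [CompleteLattice α] [CompleteLattice β] (f : α → β) : Prop :=
  PreservesJoins f ∧ (∀ p : α, IsAtom p → IsAtom (f p) ∨ f p = ⊥) ∧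
    (∀ x : β, IsCoatom x → IsCoatom (rAdj f x) ∨ rAdj f x = ⊤)

/-- Axiom A₀ : for any two coatoms `x`, `y`, the atoms below `x` together with the
atoms below `y` do not exhaust all atoms. -/
def AxiomA0 (α : Type*) [CompleteLattice α] : Prop :=
  ∀ x y : α, IsCoatom x → IsCoatom y →
    atomsBelow x ∪ atomsBelow y ≠ {p : α | IsAtom p}

/-- The dual of axiom A₀ (A₀ in `Lᵒᵖ`). -/
def AxiomA0Dual (α : Type*) [CompleteLattice α] : Prop :=
  ∀ p q : α, IsAtom p → IsAtom q →
    coatomsAbove p ∪ coatomsAbove q ≠ {x : α | IsCoatom x}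

/-- Conditions for a complete lattice to be an object of `Cal⁰_Sym`. -/
def CalCond (α : Type*) [CompleteLattice α] : Prop :=
  IsAtomistic α ∧ IsCoatomistic α ∧ AxiomA0 α ∧ AxiomA0Dual α

def atomPairs (α β : Type*) [CompleteLattice α] [CompleteLattice β] : Set (α × β) :=
  {p | IsAtom p.1 ∧ IsAtom p.2}

def sec1 {α β : Type*} (R : Set (α × β)) (p₂ : β) : Set α := {q₁ | (q₁, p₂) ∈ R}

def sec2 {α β : Type*} (R : Set (α × β)) (p₁ : α) : Set β := {q₂ | (p₁, q₂) ∈ R}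

/-- A section belongs to `Cl(Σ' ∪ {1})`: it is the set of atoms below a coatom,
or the set of all atoms. -/
def goodSec {α : Type*} [CompleteLattice α] (S : Set α) : Prop :=
  (∃ x : α, IsCoatom x ∧ S = atomsBelow x) ∨ S = {p : α | IsAtom p}

/-- The set `Σ'_⊛` of the definition of `L1 ⊛ L2`. -/
def starCoatoms (α β : Type*) [CompleteLattice α] [CompleteLattice β] :
    Set (Set (α × β)) :=
  {R | R ⊂ atomPairs α β ∧ (∀ p₂ : β, IsAtom p₂ → goodSec (sec1 R p₂)) ∧
      (∀ p₁ : α, IsAtom p₁ → goodSec (sec2 R p₁))}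

/-- The tensor product `L1 ⊛ L2`, as a closure system on `Σ₁ × Σ₂`
(`⋂₀ ∅` is normalized to the ground set `Σ₁ × Σ₂`). -/
def tensorCS (α β : Type*) [CompleteLattice α] [CompleteLattice β] :
    Set (Set (α × β)) :=
  {S | ∃ ω ⊆ starCoatoms α β, S = atomPairs α β ∩ ⋂₀ ω}

/-- `a₁ □ a₂ = (Σ[a₁] × Σ₂) ∪ (Σ₁ × Σ[a₂])`. -/
def box {α β : Type*} [CompleteLattice α] [CompleteLattice β] (a₁ : α) (a₂ : β) :
    Set (α × β) :=
  {p ∈ atomPairs α β | p.1 ≤ a₁ ∨ p.2 ≤ a₂}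

/-- `a₁ ∘ a₂ = Σ[a₁] × Σ[a₂]`. -/
def circ {α β : Type*} [CompleteLattice α] [CompleteLattice β] (a₁ : α) (a₂ : β) :
    Set (α × β) :=
  {p ∈ atomPairs α β | p.1 ≤ a₁ ∧ p.2 ≤ a₂}

/-- Closure of a subset in a closure system. -/
def clF {X : Type*} (C : Set (Set X)) (T : Set X) : Set X := ⋂₀ {S ∈ C | T ⊆ S}

/-- Atoms of a closure system ordered by inclusion. -/
def IsAtomF {X : Type*} (C : Set (Set X)) (R : Set X) : Prop :=
  R ∈ C ∧ R ≠ ∅ ∧ ∀ S ∈ C, S ⊂ R → S = ∅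

/-- Coatoms of a closure system with ground set `G`, ordered by inclusion. -/
def IsCoatomF {X : Type*} (C : Set (Set X)) (G : Set X) (R : Set X) : Prop :=
  R ∈ C ∧ R ≠ G ∧ ∀ S ∈ C, R ⊂ S → S = G

/-- Morphism of `Cal⁰_Sym` between two closure systems `(C,G)` and `(D,H)`:
preserves arbitrary joins (joins being closures of unions), sends atoms to atoms or
`∅`, and its right adjoint sends coatoms to coatoms or the ground set. -/
def CSMor {X Y : Type*} (C : Set (Set X)) (G : Set X) (D : Set (Set Y)) (H : Set Y)
    (u : {S // S ∈ C} → {S // S ∈ D}) : Prop :=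
  (∀ (W : Set {S // S ∈ C}) (hW : clF C (⋃ S ∈ W, S.val) ∈ C)
      (hW' : clF D (⋃ S ∈ W, (u S).val) ∈ D),
      u ⟨clF C (⋃ S ∈ W, S.val), hW⟩ = ⟨clF D (⋃ S ∈ W, (u S).val), hW'⟩) ∧
  (∀ S : {S // S ∈ C}, IsAtomF C S.val → IsAtomF D (u S).val ∨ (u S).val = ∅) ∧
  (∀ R : Set Y, IsCoatomF D H R →
    IsCoatomF C G (clF C (⋃ S ∈ {S : {S // S ∈ C} | (u S).val ⊆ R}, S.val)) ∨
      clF C (⋃ S ∈ {S : {S // S ∈ C} | (u S).val ⊆ R}, S.val) = G)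

section Aux
variable {α : Type*} [CompleteLattice α]

lemma eq_sSup_atomsBelow (hA : IsAtomistic α) (x : α) : x = sSup (atomsBelow x) := by
  obtain ⟨s, hx, hs⟩ := @eq_sSup_atoms _ _ hA x
  refine le_antisymm ?_ (sSup_le fun a ha => ha.2)
  rw [hx]
  exact sSup_le_sSup fun a ha => ⟨hs a ha, hx ▸ le_sSup ha⟩

lemma coatom_le_coatom {x y : α} (hx : IsCoatom x) (hy : IsCoatom y) (h : x ≤ y) : x = y := by
  rcases h.lt_or_eq with h | h
  · exact absurd (hx.2 y h) hy.1
  · exact h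

lemma atomsBelow_subset_coatom (hA : IsAtomistic α) {x y : α} (hx : IsCoatom x)
    (hy : IsCoatom y) (h : atomsBelow x ⊆ atomsBelow y) : x = y :=
  coatom_le_coatom hx hy <| by
    calc x = sSup (atomsBelow x) := eq_sSup_atomsBelow hA x
    _ ≤ sSup (atomsBelow y) := sSup_le_sSup h
    _ ≤ y := sSup_le fun a ha => ha.2

lemma exists_coatom_not_le (hC : IsCoatomistic α) {p : α} (hp : IsAtom p) :
    ∃ x, IsCoatom x ∧ ¬ p ≤ x := by
  obtain ⟨s, hbot, hs⟩ := @eq_sInf_coatoms _ _ hC (⊥ : α)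
  by_contra h
  push_neg at h
  have : p ≤ ⊥ := hbot ▸ le_sInf fun x hx => h x (hs x hx)
  exact hp.1 (le_bot_iff.mp this)

lemma exists_coatom_sep (hC : IsCoatomistic α) {a a' : α} (ha : IsAtom a) (ha' : IsAtom a')
    (hne : a' ≠ a) : ∃ x, IsCoatom x ∧ a ≤ x ∧ ¬ a' ≤ x := by
  obtain ⟨s, heq, hs⟩ := @eq_sInf_coatoms _ _ hC a
  by_contra h
  push_neg at h
  have hle : a' ≤ a := heq ▸ le_sInf fun x hx => h x (hs x hx) (heq ▸ sInf_le hx)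
  rcases hle.lt_or_eq with h' | h'
  · exact ha'.1 (ha.2 a' h')
  · exact hne h'

lemma exists_atom_not_le (hA : IsAtomistic α) {x : α} (hx : x ≠ ⊤) :
    ∃ p, IsAtom p ∧ ¬ p ≤ x := by
  by_contra h
  push_neg at h
  have htop : (⊤ : α) ≤ x := by
    rw [eq_sSup_atomsBelow hA (⊤ : α)]
    exact sSup_le fun a ha => h a ha.1
  exact hx (le_antisymm le_top htop)

lemma exists_atom_notin_two (hA : AxiomA0 α) {x y : α} (hx : IsCoatom x) (hy : IsCoatom y) :
    ∃ p, IsAtom p ∧ ¬ p ≤ x ∧ ¬ p ≤ y := by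
  have hne := hA x y hx hy
  have hsub : atomsBelow x ∪ atomsBelow y ⊆ {p : α | IsAtom p} := by
    rintro p (hp | hp) <;> exact hp.1
  obtain ⟨p, hp, hnp⟩ := Set.exists_of_ssubset (ssubset_of_subset_of_ne hsub hne)
  exact ⟨p, hp, fun h => hnp (Or.inl ⟨hp, h⟩), fun h => hnp (Or.inr ⟨hp, h⟩)⟩

end Aux

section Galois
variable {α β : Type*} [CompleteLattice α] [CompleteLattice β] {f : α → β}

lemma PreservesJoins.monotone (hf : PreservesJoins f) : Monotone f := by
  intro a c hac
  have h1 : c = sSup {a, c} := by rw [sSup_pair, sup_eq_right.mpr hac]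
  have h2 : f a ≤ sSup (f '' {a, c}) := le_sSup ⟨a, by simp, rfl⟩
  rwa [← hf, ← h1] at h2

lemma galois (hf : PreservesJoins f) {a : α} {b : β} : f a ≤ b ↔ a ≤ rAdj f b := by
  constructor
  · exact fun h => le_sSup h
  · intro h
    have h2 : f (rAdj f b) ≤ b := by
      rw [rAdj, hf]
      exact sSup_le (by rintro _ ⟨a', ha', rfl⟩; exact ha')
    exact (hf.monotone h).trans h2

end Galois
section Tensor
variable {α β : Type*} [CompleteLattice α] [CompleteLattice β]

lemma mem_tensor_subset {S : Set (α × β)} (h : S ∈ tensorCS α β) : S ⊆ atomPairs α β := by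
  obtain ⟨ω, _, rfl⟩ := h; exact Set.inter_subset_left

lemma ground_mem_tensor : atomPairs α β ∈ tensorCS α β :=
  ⟨∅, Set.empty_subset _, by simp⟩

lemma star_mem_tensor {W : Set (α × β)} (h : W ∈ starCoatoms α β) : W ∈ tensorCS α β :=
  ⟨{W}, Set.singleton_subset_iff.mpr h, by
    rw [Set.sInter_singleton, Set.inter_eq_right.mpr h.1.subset]⟩

lemma mem_tensor_of {S : Set (α × β)} (hS : S ⊆ atomPairs α β)
    (h : ∀ q ∈ atomPairs α β, q ∉ S → ∃ W ∈ starCoatoms α β, S ⊆ W ∧ q ∉ W) :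
    S ∈ tensorCS α β := by
  refine ⟨{W | W ∈ starCoatoms α β ∧ S ⊆ W}, fun W hW => hW.1, ?_⟩
  ext q
  constructor
  · intro hq
    exact ⟨hS hq, Set.mem_sInter.mpr fun W hW => hW.2 hq⟩
  · rintro ⟨hq, hq2⟩
    by_contra hqS
    obtain ⟨W, hW, hSW, hqW⟩ := h q hq hqS
    exact hqW (Set.mem_sInter.mp hq2 W ⟨hW, hSW⟩)

lemma sInter_mem_tensor {F : Set (Set (α × β))} (hF : F ⊆ tensorCS α β)
    (hG : atomPairs α β ∈ F) : ⋂₀ F ∈ tensorCS α β := by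
  apply mem_tensor_of (Set.sInter_subset_of_mem hG)
  intro q hq hqS
  rw [Set.mem_sInter] at hqS
  push_neg at hqS
  obtain ⟨S, hSF, hqS⟩ := hqS
  obtain ⟨ω, hω, rfl⟩ := hF hSF
  have hq2 : q ∉ ⋂₀ ω := fun h => hqS ⟨hq, h⟩
  rw [Set.mem_sInter] at hq2
  push_neg at hq2
  obtain ⟨W, hWω, hqW⟩ := hq2
  exact ⟨W, hω hWω, (Set.sInter_subset_of_mem hSF).trans
    (Set.inter_subset_right.trans (Set.sInter_subset_of_mem hWω)), hqW⟩

lemma subset_clF {X : Type*} (C : Set (Set X)) (T : Set X) : T ⊆ clF C T :=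
  Set.subset_sInter fun _ hS => hS.2

lemma clF_subset {X : Type*} {C : Set (Set X)} {T S : Set X} (hS : S ∈ C) (h : T ⊆ S) :
    clF C T ⊆ S :=
  Set.sInter_subset_of_mem ⟨hS, h⟩

lemma clF_eq_self {X : Type*} {C : Set (Set X)} {S : Set X} (hS : S ∈ C) : clF C S = S :=
  (clF_subset hS subset_rfl).antisymm (subset_clF C S)

lemma clF_mono {X : Type*} {C : Set (Set X)} {T T' : Set X} (h : T ⊆ T') :
    clF C T ⊆ clF C T' :=
  Set.subset_sInter fun S hS => Set.sInter_subset_of_mem ⟨hS.1, h.trans hS.2⟩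

lemma clF_mem_tensor {T : Set (α × β)} (hT : T ⊆ atomPairs α β) :
    clF (tensorCS α β) T ∈ tensorCS α β :=
  sInter_mem_tensor (fun _ hS => hS.1) ⟨ground_mem_tensor, hT⟩

lemma box_mem_star (hA : IsAtomistic α) (hB : IsAtomistic β) {x : α} {y : β}
    (hx : IsCoatom x) (hy : IsCoatom y) : box x y ∈ starCoatoms α β := by
  refine ⟨ssubset_of_subset_of_ne (Set.sep_subset _ _) ?_, ?_, ?_⟩
  · obtain ⟨p, hp, hpx⟩ := exists_atom_not_le hA hx.1
    obtain ⟨q, hq, hqy⟩ := exists_atom_not_le hB hy.1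
    intro hsub
    have hb : (p, q) ∈ box x y := hsub ▸ (show (p,q) ∈ atomPairs α β from ⟨hp, hq⟩)
    rcases hb.2 with h | h
    exacts [hpx h, hqy h]
  · intro q₂ hq₂
    by_cases h : q₂ ≤ y
    · right; ext q₁; simp [sec1, box, atomPairs, hq₂, h]
    · left
      exact ⟨x, hx, by ext q₁; simp [sec1, box, atomPairs, atomsBelow, hq₂, h]⟩
  · intro q₁ hq₁
    by_cases h : q₁ ≤ x
    · right; ext q₂; simp [sec2, box, atomPairs, hq₁, h]
    · left
      exact ⟨y, hy, by ext q₂; simp [sec2, box, atomPairs, atomsBelow, hq₁, h]⟩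

lemma exists_star_sep (hα : CalCond α) (hβ : CalCond β) {q q' : α × β}
    (hq : q ∈ atomPairs α β) (hq' : q' ∈ atomPairs α β) (hne : q' ≠ q) :
    ∃ W ∈ starCoatoms α β, q ∈ W ∧ q' ∉ W := by
  obtain ⟨a, b⟩ := q
  obtain ⟨a', b'⟩ := q'
  by_cases haa : a' = a
  · have hbb : b' ≠ b := fun h => hne (by rw [haa, h])
    obtain ⟨y, hy, hby, hb'y⟩ := exists_coatom_sep hβ.2.1 hq.2 hq'.2 hbb
    obtain ⟨x, hx, ha'x⟩ := exists_coatom_not_le hα.2.1 hq'.1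
    exact ⟨box x y, box_mem_star hα.1 hβ.1 hx hy, ⟨hq, Or.inr hby⟩,
      fun h => h.2.elim ha'x hb'y⟩
  · obtain ⟨x, hx, hax, ha'x⟩ := exists_coatom_sep hα.2.1 hq.1 hq'.1 haa
    obtain ⟨y, hy, hb'y⟩ := exists_coatom_not_le hβ.2.1 hq'.2
    exact ⟨box x y, box_mem_star hα.1 hβ.1 hx hy, ⟨hq, Or.inl hax⟩,
      fun h => h.2.elim ha'x hb'y⟩

lemma singleton_mem_tensor (hα : CalCond α) (hβ : CalCond β) {q : α × β}
    (hq : q ∈ atomPairs α β) : ({q} : Set (α × β)) ∈ tensorCS α β := by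
  apply mem_tensor_of (by simpa)
  intro q' hq' hq'S
  have hne : q' ≠ q := by simpa using hq'S
  obtain ⟨W, hW, hqW, hq'W⟩ := exists_star_sep hα hβ hq hq' hne
  exact ⟨W, hW, by simpa using hqW, hq'W⟩

lemma empty_mem_tensor (hα : CalCond α) (hβ : CalCond β) :
    (∅ : Set (α × β)) ∈ tensorCS α β := by
  apply mem_tensor_of (Set.empty_subset _)
  rintro ⟨a, b⟩ hq _
  obtain ⟨x, hx, hax⟩ := exists_coatom_not_le hα.2.1 hq.1
  obtain ⟨y, hy, hby⟩ := exists_coatom_not_le hβ.2.1 hq.2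
  exact ⟨box x y, box_mem_star hα.1 hβ.1 hx hy, Set.empty_subset _,
    fun h => h.2.elim hax hby⟩

end Tensor
section Antichain
variable {α β : Type*} [CompleteLattice α] [CompleteLattice β]

lemma star_antichain (hα : CalCond α) (hβ : CalCond β) {W W' : Set (α × β)}
    (hW : W ∈ starCoatoms α β) (hW' : W' ∈ starCoatoms α β) (hsub : W ⊆ W') : W = W' := by
  by_contra hne
  obtain ⟨⟨a, b⟩, habW', habW⟩ := Set.exists_of_ssubset (ssubset_of_subset_of_ne hsub hne)
  have hab : (a, b) ∈ atomPairs α β := hW'.1.subset habW'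
  -- sec1 W b is a proper good section
  obtain ⟨x₀, hx₀c, hx₀⟩ : ∃ x₀, IsCoatom x₀ ∧ sec1 W b = atomsBelow x₀ := by
    rcases hW.2.1 b hab.2 with h | h
    · exact h
    · exact absurd (show a ∈ sec1 W b from h ▸ hab.1) habW
  have hax₀ : ¬ a ≤ x₀ := by
    intro h
    exact habW (show a ∈ sec1 W b from hx₀ ▸ ⟨hab.1, h⟩)
  -- sec1 W' b is everything
  have h2 : sec1 W' b = {p : α | IsAtom p} := by
    rcases hW'.2.1 b hab.2 with ⟨x', hx', hx'e⟩ | h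
    · exfalso
      have hss : atomsBelow x₀ ⊆ atomsBelow x' := by
        rw [← hx₀, ← hx'e]; exact fun q hq => hsub hq
      have hxx : x₀ = x' := atomsBelow_subset_coatom hα.1 hx₀c hx' hss
      have haW' : a ∈ atomsBelow x' := hx'e ▸ habW'
      exact hax₀ (hxx ▸ haW'.2)
    · exact h
  -- W' is proper
  obtain ⟨⟨c, d⟩, hcd, hcdW'⟩ := Set.exists_of_ssubset hW'.1
  obtain ⟨xd, hxdc, hxd⟩ : ∃ xd, IsCoatom xd ∧ sec1 W' d = atomsBelow xd := by
    rcases hW'.2.1 d hcd.2 with h | h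
    · exact h
    · exact absurd (show c ∈ sec1 W' d from h ▸ hcd.1) hcdW'
  obtain ⟨e, he, hex₀, hexd⟩ := exists_atom_notin_two hα.2.2.1 hx₀c hxdc
  have hebW' : (e, b) ∈ W' := show e ∈ sec1 W' b from h2 ▸ he
  have hebW : (e, b) ∉ W := fun h =>
    hex₀ (show e ∈ atomsBelow x₀ from hx₀ ▸ (show e ∈ sec1 W b from h)).2
  have hedW' : (e, d) ∉ W' := fun h =>
    hexd (show e ∈ atomsBelow xd from hxd ▸ (show e ∈ sec1 W' d from h)).2
  obtain ⟨y', hy'c, hy'⟩ : ∃ y', IsCoatom y' ∧ sec2 W' e = atomsBelow y' := by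
    rcases hW'.2.2 e he with h | h
    · exact h
    · exact absurd (show d ∈ sec2 W' e from h ▸ hcd.2) hedW'
  obtain ⟨z, hzc, hz⟩ : ∃ z, IsCoatom z ∧ sec2 W e = atomsBelow z := by
    rcases hW.2.2 e he with h | h
    · exact h
    · exact absurd (show b ∈ sec2 W e from h ▸ hab.2) hebW
  have hzy : z = y' := by
    apply atomsBelow_subset_coatom hβ.1 hzc hy'c
    rw [← hz, ← hy']
    exact fun q hq => hsub hq
  have hb1 : b ∈ atomsBelow y' := hy' ▸ (show b ∈ sec2 W' e from hebW')
  have hb2 : b ∈ sec2 W e := by rw [hz, hzy]; exact hb1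
  exact hebW hb2

lemma proper_subset_star {S : Set (α × β)} (hS : S ∈ tensorCS α β)
    (hne : S ≠ atomPairs α β) : ∃ W ∈ starCoatoms α β, S ⊆ W := by
  obtain ⟨ω, hω, rfl⟩ := hS
  rcases Set.eq_empty_or_nonempty ω with rfl | ⟨W, hWmem⟩
  · simp at hne
  · exact ⟨W, hω hWmem, Set.inter_subset_right.trans (Set.sInter_subset_of_mem hWmem)⟩

lemma isCoatomF_iff_star (hα : CalCond α) (hβ : CalCond β) {R : Set (α × β)} :
    IsCoatomF (tensorCS α β) (atomPairs α β) R ↔ R ∈ starCoatoms α β := by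
  constructor
  · rintro ⟨hRC, hRne, hmax⟩
    obtain ⟨W, hWs, hRW⟩ := proper_subset_star hRC hRne
    have hRWeq : R = W := by
      by_contra h
      exact hWs.1.ne (hmax W (star_mem_tensor hWs) (ssubset_of_subset_of_ne hRW h))
    exact hRWeq ▸ hWs
  · intro hR
    refine ⟨star_mem_tensor hR, hR.1.ne, ?_⟩
    intro S hS hRS
    by_contra hne
    obtain ⟨W, hWs, hSW⟩ := proper_subset_star hS hne
    have hRWeq : R = W := star_antichain hα hβ hR hWs (hRS.subset.trans hSW)
    have hSR : S ⊆ R := hRWeq ▸ hSW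
    exact (ssubset_iff_subset_ne.mp hRS).2 (hRS.subset.antisymm hSR)

end Antichain
section Maps
variable {α₁ β₁ α₂ β₂ : Type*}
  [CompleteLattice α₁] [CompleteLattice β₁] [CompleteLattice α₂] [CompleteLattice β₂]

/-- forward image of a set of atom pairs, discarding killed pairs. -/
def tmap (f₁ : α₁ → α₂) (f₂ : β₁ → β₂) (S : Set (α₁ × β₁)) : Set (α₂ × β₂) :=
  {q | ∃ p ∈ S, f₁ p.1 ≠ ⊥ ∧ f₂ p.2 ≠ ⊥ ∧ q = (f₁ p.1, f₂ p.2)}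

/-- preimage-with-kernel of a set of atom pairs. -/
def hmap (f₁ : α₁ → α₂) (f₂ : β₁ → β₂) (R : Set (α₂ × β₂)) : Set (α₁ × β₁) :=
  {p | p ∈ atomPairs α₁ β₁ ∧ (f₁ p.1 ≠ ⊥ → f₂ p.2 ≠ ⊥ → (f₁ p.1, f₂ p.2) ∈ R)}

variable {f₁ : α₁ → α₂} {f₂ : β₁ → β₂}

lemma g_mem_ground (hf₁ : IsMor f₁) (hf₂ : IsMor f₂) {p : α₁ × β₁}
    (hp : p ∈ atomPairs α₁ β₁) (h1 : f₁ p.1 ≠ ⊥) (h2 : f₂ p.2 ≠ ⊥) :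
    (f₁ p.1, f₂ p.2) ∈ atomPairs α₂ β₂ :=
  ⟨(hf₁.2.1 p.1 hp.1).resolve_right h1, (hf₂.2.1 p.2 hp.2).resolve_right h2⟩

lemma tmap_subset_ground (hf₁ : IsMor f₁) (hf₂ : IsMor f₂) {S : Set (α₁ × β₁)}
    (hS : S ⊆ atomPairs α₁ β₁) : tmap f₁ f₂ S ⊆ atomPairs α₂ β₂ := by
  rintro q ⟨p, hpS, h1, h2, rfl⟩
  exact g_mem_ground hf₁ hf₂ (hS hpS) h1 h2

lemma hmap_subset_ground (R : Set (α₂ × β₂)) : hmap f₁ f₂ R ⊆ atomPairs α₁ β₁ :=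
  fun _ hp => hp.1

lemma tmap_mono {S T : Set (α₁ × β₁)} (h : S ⊆ T) : tmap f₁ f₂ S ⊆ tmap f₁ f₂ T := by
  rintro q ⟨p, hpS, h1, h2, rfl⟩
  exact ⟨p, h hpS, h1, h2, rfl⟩

lemma tmap_subset_iff {S : Set (α₁ × β₁)} {R : Set (α₂ × β₂)}
    (hS : S ⊆ atomPairs α₁ β₁) : tmap f₁ f₂ S ⊆ R ↔ S ⊆ hmap f₁ f₂ R := by
  constructor
  · intro h p hp
    exact ⟨hS hp, fun h1 h2 => h ⟨p, hp, h1, h2, rfl⟩⟩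
  · rintro h q ⟨p, hp, h1, h2, rfl⟩
    exact (h hp).2 h1 h2

lemma hmap_star (hf₁ : IsMor f₁) (hf₂ : IsMor f₂) {R : Set (α₂ × β₂)}
    (hR :  (∀ p₂ : β₂, IsAtom p₂ → goodSec (sec1 R p₂)) ∧
      (∀ p₁ : α₂, IsAtom p₁ → goodSec (sec2 R p₁))) :
    hmap f₁ f₂ R = atomPairs α₁ β₁ ∨ hmap f₁ f₂ R ∈ starCoatoms α₁ β₁ := by
  by_cases hne : hmap f₁ f₂ R = atomPairs α₁ β₁
  · exact Or.inl hne
  right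
  refine ⟨ssubset_of_subset_of_ne (hmap_subset_ground R) hne, ?_, ?_⟩
  · intro p₂ hp₂
    by_cases hb : f₂ p₂ = ⊥
    · right; ext q₁
      simp only [sec1, hmap, Set.mem_setOf_eq, atomPairs]
      exact ⟨fun h => h.1.1, fun h => ⟨⟨h, hp₂⟩, fun _ h2 => absurd hb h2⟩⟩
    · have hb' : IsAtom (f₂ p₂) := (hf₂.2.1 p₂ hp₂).resolve_right hb
      rcases hR.1 (f₂ p₂) hb' with ⟨x, hx, hxe⟩ | hall
      · have hsec : sec1 (hmap f₁ f₂ R) p₂ = atomsBelow (rAdj f₁ x) := by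
          ext q₁
          simp only [sec1, hmap, Set.mem_setOf_eq, atomsBelow, atomPairs]
          constructor
          · rintro ⟨⟨hq₁, _⟩, himp⟩
            refine ⟨hq₁, ?_⟩
            by_cases ha : f₁ q₁ = ⊥
            · exact (galois hf₁.1).mp (ha ▸ bot_le)
            · have hmem : f₁ q₁ ∈ atomsBelow x := hxe ▸ (show f₁ q₁ ∈ sec1 R (f₂ p₂) from himp ha hb)
              exact (galois hf₁.1).mp hmem.2
          · rintro ⟨hq₁, hle⟩
            refine ⟨⟨hq₁, hp₂⟩, fun ha _ => ?_⟩
            have hmem : f₁ q₁ ∈ atomsBelow x :=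
              ⟨(hf₁.2.1 q₁ hq₁).resolve_right ha, (galois hf₁.1).mpr hle⟩
            exact (show f₁ q₁ ∈ sec1 R (f₂ p₂) from hxe ▸ hmem)
        rcases hf₁.2.2 x hx with hco | htop
        · exact Or.inl ⟨_, hco, hsec⟩
        · right
          rw [hsec, htop]
          ext q₁; simp [atomsBelow]
      · right; ext q₁
        simp only [sec1, hmap, Set.mem_setOf_eq, atomPairs]
        constructor
        · exact fun h => h.1.1
        · intro hq₁
          refine ⟨⟨hq₁, hp₂⟩, fun ha _ => ?_⟩
          exact (show f₁ q₁ ∈ sec1 R (f₂ p₂) from hall ▸ (hf₁.2.1 q₁ hq₁).resolve_right ha)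
  · intro p₁ hp₁
    by_cases ha : f₁ p₁ = ⊥
    · right; ext q₂
      simp only [sec2, hmap, Set.mem_setOf_eq, atomPairs]
      exact ⟨fun h => h.1.2, fun h => ⟨⟨hp₁, h⟩, fun h1 _ => absurd ha h1⟩⟩
    · have ha' : IsAtom (f₁ p₁) := (hf₁.2.1 p₁ hp₁).resolve_right ha
      rcases hR.2 (f₁ p₁) ha' with ⟨y, hy, hye⟩ | hall
      · have hsec : sec2 (hmap f₁ f₂ R) p₁ = atomsBelow (rAdj f₂ y) := by
          ext q₂
          simp only [sec2, hmap, Set.mem_setOf_eq, atomsBelow, atomPairs]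
          constructor
          · rintro ⟨⟨_, hq₂⟩, himp⟩
            refine ⟨hq₂, ?_⟩
            by_cases hb : f₂ q₂ = ⊥
            · exact (galois hf₂.1).mp (hb ▸ bot_le)
            · have hmem : f₂ q₂ ∈ atomsBelow y := hye ▸ (show f₂ q₂ ∈ sec2 R (f₁ p₁) from himp ha hb)
              exact (galois hf₂.1).mp hmem.2
          · rintro ⟨hq₂, hle⟩
            refine ⟨⟨hp₁, hq₂⟩, fun _ hb => ?_⟩
            have hmem : f₂ q₂ ∈ atomsBelow y :=
              ⟨(hf₂.2.1 q₂ hq₂).resolve_right hb, (galois hf₂.1).mpr hle⟩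
            exact (show f₂ q₂ ∈ sec2 R (f₁ p₁) from hye ▸ hmem)
        rcases hf₂.2.2 y hy with hco | htop
        · exact Or.inl ⟨_, hco, hsec⟩
        · right
          rw [hsec, htop]
          ext q₂; simp [atomsBelow]
      · right; ext q₂
        simp only [sec2, hmap, Set.mem_setOf_eq, atomPairs]
        constructor
        · exact fun h => h.1.2
        · intro hq₂
          refine ⟨⟨hp₁, hq₂⟩, fun _ hb => ?_⟩
          exact (show f₂ q₂ ∈ sec2 R (f₁ p₁) from hall ▸ (hf₂.2.1 q₂ hq₂).resolve_right hb)

lemma hmap_star_mem (hf₁ : IsMor f₁) (hf₂ : IsMor f₂) {R : Set (α₂ × β₂)}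
    (hR : R ∈ starCoatoms α₂ β₂) : hmap f₁ f₂ R ∈ tensorCS α₁ β₁ := by
  rcases hmap_star hf₁ hf₂ ⟨hR.2.1, hR.2.2⟩ with h | h
  · rw [h]; exact ground_mem_tensor
  · exact star_mem_tensor h

lemma hmap_mem (hf₁ : IsMor f₁) (hf₂ : IsMor f₂) {R : Set (α₂ × β₂)}
    (hR : R ∈ tensorCS α₂ β₂) : hmap f₁ f₂ R ∈ tensorCS α₁ β₁ := by
  obtain ⟨ω, hω, rfl⟩ := hR
  have heq : hmap f₁ f₂ (atomPairs α₂ β₂ ∩ ⋂₀ ω) =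
      ⋂₀ (insert (atomPairs α₁ β₁) (hmap f₁ f₂ '' ω)) := by
    ext p
    simp only [hmap, Set.mem_setOf_eq, Set.mem_sInter, Set.mem_insert_iff, Set.mem_image,
      Set.mem_inter_iff]
    constructor
    · rintro ⟨hp, himp⟩ S hS
      rcases hS with rfl | ⟨W, hWω, rfl⟩
      · exact hp
      · exact ⟨hp, fun h1 h2 => Set.mem_sInter.mp (himp h1 h2).2 W hWω⟩
    · intro h
      have hp : p ∈ atomPairs α₁ β₁ := h _ (Or.inl rfl)
      refine ⟨hp, fun h1 h2 => ⟨g_mem_ground hf₁ hf₂ hp h1 h2, ?_⟩⟩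
      exact Set.mem_sInter.mpr fun W hWω => (h _ (Or.inr ⟨W, hWω, rfl⟩)).2 h1 h2
  rw [heq]
  apply sInter_mem_tensor ?_ (Set.mem_insert _ _)
  rintro S (rfl | ⟨W, hWω, rfl⟩)
  · exact ground_mem_tensor
  · exact hmap_star_mem hf₁ hf₂ (hω hWω)

end Maps
section Cont
variable {α β : Type*} [CompleteLattice α] [CompleteLattice β]

lemma clF_biUnion_clF {ι : Type*} (W : Set ι) (X : ι → Set (α × β))
    (hX : ∀ i ∈ W, X i ⊆ atomPairs α β) :
    clF (tensorCS α β) (⋃ i ∈ W, clF (tensorCS α β) (X i)) =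
      clF (tensorCS α β) (⋃ i ∈ W, X i) := by
  have hU : (⋃ i ∈ W, X i) ⊆ atomPairs α β := Set.iUnion₂_subset hX
  refine Set.Subset.antisymm ?_ (clF_mono (Set.iUnion₂_mono fun i hi => subset_clF _ _))
  apply clF_subset (clF_mem_tensor hU)
  exact Set.iUnion₂_subset fun i hi => clF_mono (Set.subset_biUnion_of_mem hi)

end Cont

section Maps2
variable {α₁ β₁ α₂ β₂ : Type*}
  [CompleteLattice α₁] [CompleteLattice β₁] [CompleteLattice α₂] [CompleteLattice β₂]
  {f₁ : α₁ → α₂} {f₂ : β₁ → β₂}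

lemma clF_tmap_clF (hf₁ : IsMor f₁) (hf₂ : IsMor f₂) {T : Set (α₁ × β₁)}
    (hT : T ⊆ atomPairs α₁ β₁) :
    clF (tensorCS α₂ β₂) (tmap f₁ f₂ (clF (tensorCS α₁ β₁) T)) =
      clF (tensorCS α₂ β₂) (tmap f₁ f₂ T) := by
  have hT' : clF (tensorCS α₁ β₁) T ⊆ atomPairs α₁ β₁ := clF_subset ground_mem_tensor hT
  refine Set.Subset.antisymm ?_ (clF_mono (tmap_mono (subset_clF _ _)))
  have hR : clF (tensorCS α₂ β₂) (tmap f₁ f₂ T) ∈ tensorCS α₂ β₂ :=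
    clF_mem_tensor (tmap_subset_ground hf₁ hf₂ hT)
  apply clF_subset hR
  rw [tmap_subset_iff hT']
  apply clF_subset (hmap_mem hf₁ hf₂ hR)
  rw [← tmap_subset_iff hT]
  exact subset_clF _ _

lemma tmap_biUnion {ι : Type*} (W : Set ι) (X : ι → Set (α₁ × β₁)) :
    tmap f₁ f₂ (⋃ i ∈ W, X i) = ⋃ i ∈ W, tmap f₁ f₂ (X i) := by
  ext q
  simp only [tmap, Set.mem_setOf_eq, Set.mem_iUnion]
  constructor
  · rintro ⟨p, hp, h1, h2, rfl⟩
    obtain ⟨i, hi, hpi⟩ : ∃ i ∈ W, p ∈ X i := by simpa using hp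
    exact ⟨i, hi, p, hpi, h1, h2, rfl⟩
  · rintro ⟨i, hi, p, hpi, h1, h2, rfl⟩
    exact ⟨p, ⟨i, hi, hpi⟩, h1, h2, rfl⟩

lemma tmap_singleton_pos {p : α₁ × β₁} (h1 : f₁ p.1 ≠ ⊥) (h2 : f₂ p.2 ≠ ⊥) :
    tmap f₁ f₂ {p} = {(f₁ p.1, f₂ p.2)} := by
  ext q
  simp only [tmap, Set.mem_setOf_eq, Set.mem_singleton_iff]
  constructor
  · rintro ⟨p', rfl, _, _, rfl⟩; rfl
  · rintro rfl; exact ⟨p, rfl, h1, h2, rfl⟩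

lemma tmap_singleton_neg {p : α₁ × β₁} (h : f₁ p.1 = ⊥ ∨ f₂ p.2 = ⊥) :
    tmap f₁ f₂ {p} = ∅ := by
  ext q
  simp only [tmap, Set.mem_setOf_eq, Set.mem_empty_iff_false, iff_false]
  rintro ⟨p', rfl, h1, h2, rfl⟩
  rcases h with h | h
  exacts [h1 h, h2 h]

end Maps2

set_option maxHeartbeats 1000000

/-- Given morphisms `f₁ : L₁¹ → L₁²` and `f₂ : L₂¹ → L₂²` of `Cal⁰_Sym`, there is a
unique morphism `u = f₁ ⊛ f₂ : L₁¹ ⊛ L₂¹ → L₁² ⊛ L₂²` acting on atoms by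
`u({(p₁,p₂)}) = {(f₁(p₁), f₂(p₂))}` when both images are nonzero, and `∅` otherwise. -/
theorem tensor_of_morphisms_exists_unique {α₁ β₁ α₂ β₂ : Type*}
    [CompleteLattice α₁] [CompleteLattice β₁] [CompleteLattice α₂] [CompleteLattice β₂]
    (h₁ : CalCond α₁) (h₂ : CalCond β₁) (h₃ : CalCond α₂) (h₄ : CalCond β₂)
    (f₁ : α₁ → α₂) (f₂ : β₁ → β₂) (hf₁ : IsMor f₁) (hf₂ : IsMor f₂) :
    ∃! u : {S // S ∈ tensorCS α₁ β₁} → {S // S ∈ tensorCS α₂ β₂},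
      CSMor (tensorCS α₁ β₁) (atomPairs α₁ β₁) (tensorCS α₂ β₂) (atomPairs α₂ β₂) u ∧
      ∀ (p₁ : α₁) (p₂ : β₁), IsAtom p₁ → IsAtom p₂ →
        ∀ h : ({(p₁, p₂)} : Set (α₁ × β₁)) ∈ tensorCS α₁ β₁,
          (f₁ p₁ ≠ ⊥ ∧ f₂ p₂ ≠ ⊥ ∧
            (u ⟨{(p₁, p₂)}, h⟩).val = {(f₁ p₁, f₂ p₂)}) ∨
          ((f₁ p₁ = ⊥ ∨ f₂ p₂ = ⊥) ∧ (u ⟨{(p₁, p₂)}, h⟩).val = ∅) := by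
  classical
  refine ⟨fun S => ⟨clF (tensorCS α₂ β₂) (tmap f₁ f₂ S.val),
      clF_mem_tensor (tmap_subset_ground hf₁ hf₂ (mem_tensor_subset S.2))⟩,
    ⟨⟨?_, ?_, ?_⟩, ?_⟩, ?_⟩
  · -- joins
    intro W hW hW'
    apply Subtype.ext
    show clF (tensorCS α₂ β₂) (tmap f₁ f₂ (clF (tensorCS α₁ β₁) (⋃ S ∈ W, S.val))) =
      clF (tensorCS α₂ β₂) (⋃ S ∈ W, clF (tensorCS α₂ β₂) (tmap f₁ f₂ S.val))
    have hTsub : (⋃ S ∈ W, S.val) ⊆ atomPairs α₁ β₁ :=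
      Set.iUnion₂_subset fun S _ => mem_tensor_subset S.2
    rw [clF_biUnion_clF W (fun S => tmap f₁ f₂ S.val)
        (fun S _ => tmap_subset_ground hf₁ hf₂ (mem_tensor_subset S.2)),
      clF_tmap_clF hf₁ hf₂ hTsub, tmap_biUnion]
  · -- atoms
    intro S hS
    obtain ⟨q, hqG, hq⟩ : ∃ q ∈ atomPairs α₁ β₁, S.val = {q} := by
      obtain ⟨hSC, hne, hmin⟩ := hS
      obtain ⟨q, hqq⟩ := Set.nonempty_iff_ne_empty.mpr hne
      refine ⟨q, mem_tensor_subset S.2 hqq, ?_⟩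
      have hsing : ({q} : Set (α₁ × β₁)) ∈ tensorCS α₁ β₁ :=
        singleton_mem_tensor h₁ h₂ (mem_tensor_subset S.2 hqq)
      by_contra hne2
      have hss : ({q} : Set (α₁ × β₁)) ⊂ S.val :=
        ssubset_of_subset_of_ne (Set.singleton_subset_iff.mpr hqq) (fun h => hne2 h.symm)
      exact Set.singleton_ne_empty q (hmin _ hsing hss)
    show IsAtomF (tensorCS α₂ β₂) (clF (tensorCS α₂ β₂) (tmap f₁ f₂ S.val)) ∨
      clF (tensorCS α₂ β₂) (tmap f₁ f₂ S.val) = ∅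
    rw [hq]
    by_cases hb : f₁ q.1 = ⊥ ∨ f₂ q.2 = ⊥
    · right
      rw [tmap_singleton_neg hb, clF_eq_self (empty_mem_tensor h₃ h₄)]
    · push_neg at hb
      left
      have hg : (f₁ q.1, f₂ q.2) ∈ atomPairs α₂ β₂ := g_mem_ground hf₁ hf₂ hqG hb.1 hb.2
      rw [tmap_singleton_pos hb.1 hb.2, clF_eq_self (singleton_mem_tensor h₃ h₄ hg)]
      refine ⟨singleton_mem_tensor h₃ h₄ hg, Set.singleton_ne_empty _, fun T hT hss => ?_⟩
      rcases Set.subset_singleton_iff_eq.mp hss.subset with h | h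
      · exact h
      · exact absurd h hss.ne
  · -- coatoms
    intro R hR
    have hRstar : R ∈ starCoatoms α₂ β₂ := (isCoatomF_iff_star h₃ h₄).mp hR
    have hRD : R ∈ tensorCS α₂ β₂ := star_mem_tensor hRstar
    have hA : clF (tensorCS α₁ β₁)
        (⋃ S ∈ {S : {S // S ∈ tensorCS α₁ β₁} |
          (clF (tensorCS α₂ β₂) (tmap f₁ f₂ S.val)) ⊆ R}, S.val) = hmap f₁ f₂ R := by
      apply Set.Subset.antisymm
      · apply clF_subset (hmap_mem hf₁ hf₂ hRD)
        apply Set.iUnion₂_subset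
        intro S hS
        rw [← tmap_subset_iff (mem_tensor_subset S.2)]
        exact (subset_clF _ _).trans hS
      · intro p hp
        apply subset_clF
        have hmem : hmap f₁ f₂ R ∈ tensorCS α₁ β₁ := hmap_mem hf₁ hf₂ hRD
        have huS : clF (tensorCS α₂ β₂) (tmap f₁ f₂ (hmap f₁ f₂ R)) ⊆ R :=
          clF_subset hRD ((tmap_subset_iff (hmap_subset_ground R)).mpr subset_rfl)
        exact Set.mem_biUnion (show (⟨hmap f₁ f₂ R, hmem⟩ : {S // S ∈ tensorCS α₁ β₁}) ∈
          {S : {S // S ∈ tensorCS α₁ β₁} |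
            (clF (tensorCS α₂ β₂) (tmap f₁ f₂ S.val)) ⊆ R} from huS) hp
    show IsCoatomF (tensorCS α₁ β₁) (atomPairs α₁ β₁) (clF (tensorCS α₁ β₁)
        (⋃ S ∈ {S : {S // S ∈ tensorCS α₁ β₁} |
          (clF (tensorCS α₂ β₂) (tmap f₁ f₂ S.val)) ⊆ R}, S.val)) ∨
      clF (tensorCS α₁ β₁)
        (⋃ S ∈ {S : {S // S ∈ tensorCS α₁ β₁} |
          (clF (tensorCS α₂ β₂) (tmap f₁ f₂ S.val)) ⊆ R}, S.val) = atomPairs α₁ β₁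
    rw [hA]
    rcases hmap_star hf₁ hf₂ ⟨hRstar.2.1, hRstar.2.2⟩ with h | h
    · exact Or.inr h
    · exact Or.inl ((isCoatomF_iff_star h₁ h₂).mpr h)
  · -- atom condition
    intro p₁ p₂ hp₁ hp₂ h
    by_cases hb : f₁ p₁ = ⊥ ∨ f₂ p₂ = ⊥
    · right
      refine ⟨hb, ?_⟩
      show clF (tensorCS α₂ β₂) (tmap f₁ f₂ {(p₁, p₂)}) = ∅
      rw [tmap_singleton_neg hb, clF_eq_self (empty_mem_tensor h₃ h₄)]
    · push_neg at hb
      left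
      refine ⟨hb.1, hb.2, ?_⟩
      show clF (tensorCS α₂ β₂) (tmap f₁ f₂ {(p₁, p₂)}) = {(f₁ p₁, f₂ p₂)}
      rw [tmap_singleton_pos hb.1 hb.2,
        clF_eq_self (singleton_mem_tensor h₃ h₄ (g_mem_ground hf₁ hf₂ ⟨hp₁, hp₂⟩ hb.1 hb.2))]
  · -- uniqueness
    rintro v ⟨hv1, hv2⟩
    funext S
    apply Subtype.ext
    show (v S).val = clF (tensorCS α₂ β₂) (tmap f₁ f₂ S.val)
    set Wd : Set {S // S ∈ tensorCS α₁ β₁} := {T | ∃ q ∈ S.val, T.val = {q}} with hWd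
    have hUnion : (⋃ T ∈ Wd, T.val) = S.val := by
      ext p
      constructor
      · intro hp
        simp only [Set.mem_iUnion] at hp
        obtain ⟨T, ⟨q, hq, hTq⟩, hpT⟩ := hp
        rw [hTq] at hpT
        exact hpT ▸ hq
      · intro hp
        have hmem : ({p} : Set (α₁ × β₁)) ∈ tensorCS α₁ β₁ :=
          singleton_mem_tensor h₁ h₂ (mem_tensor_subset S.2 hp)
        exact Set.mem_biUnion (show (⟨{p}, hmem⟩ : {S // S ∈ tensorCS α₁ β₁}) ∈ Wd
          from ⟨p, hp, rfl⟩) rfl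
    have hW : clF (tensorCS α₁ β₁) (⋃ T ∈ Wd, T.val) ∈ tensorCS α₁ β₁ := by
      rw [hUnion, clF_eq_self S.2]; exact S.2
    have hW' : clF (tensorCS α₂ β₂) (⋃ T ∈ Wd, (v T).val) ∈ tensorCS α₂ β₂ :=
      clF_mem_tensor (Set.iUnion₂_subset fun T _ => mem_tensor_subset (v T).2)
    have h1 := hv1.1 Wd hW hW'
    have hSeq : (⟨clF (tensorCS α₁ β₁) (⋃ T ∈ Wd, T.val), hW⟩ :
        {S // S ∈ tensorCS α₁ β₁}) = S := Subtype.ext (show clF (tensorCS α₁ β₁)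
        (⋃ T ∈ Wd, T.val) = S.val by rw [hUnion]; exact clF_eq_self S.2)
    rw [hSeq] at h1
    have hvT : ∀ T ∈ Wd, (v T).val = tmap f₁ f₂ T.val := by
      rintro T ⟨q, hq, hTq⟩
      have hqG : q ∈ atomPairs α₁ β₁ := mem_tensor_subset S.2 hq
      obtain ⟨a, b⟩ := q
      have hsing : ({(a, b)} : Set (α₁ × β₁)) ∈ tensorCS α₁ β₁ :=
        singleton_mem_tensor h₁ h₂ hqG
      have hT : T = ⟨{(a, b)}, hsing⟩ := Subtype.ext hTq
      rcases hv2 a b hqG.1 hqG.2 hsing with ⟨hna, hnb, hval⟩ | ⟨hor, hval⟩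
      · rw [hT, hval, tmap_singleton_pos hna hnb]
      · rw [hT, hval, tmap_singleton_neg hor]
    have hUeq : (⋃ T ∈ Wd, (v T).val) = tmap f₁ f₂ S.val := by
      rw [← hUnion, tmap_biUnion]
      exact Set.iUnion₂_congr hvT
    rw [h1]
    show clF (tensorCS α₂ β₂) (⋃ T ∈ Wd, (v T).val) = clF (tensorCS α₂ β₂) (tmap f₁ f₂ S.val)
    rw [hUeq]
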